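/- Let α satisfy φ < α < 2, where φ = (1 + √5)/2 is the golden ratio, and let n₁, n₂, m₁, m₂ be positive integers with n₁ ≤ (α/(α − 1))·n₂. Then H_α(n₁, m₁) + n₁ + n₂ ≤ G_α(n₁ + n₂, m₁ + m₂), where G_α(n, m) = n·(d_α − 1 + c_α·log₂ m) and H_α(n, m) = n·(d_α + c_α·log₂ m). -/

import Mathlib

/-!
The difference `G_α(n₁+n₂, m₁+m₂) − H_α(n₁, m₁) − n₁ − n₂` is
`(n₂·d_α − 2(n₁+n₂)) + c_α·((n₁+n₂)·log₂(m₁+m₂) − n₁·log₂ m₁)`.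
The hypothesis gives `n₁ + n₂ ≤ n₂·(2α−1)/(α−1)`, while already the crude bound `k₀(α) ≥ 0`
yields `d_α ≥ 6(2α−1)/(α−1) + 1`, so the first summand is nonnegative; the second is because
`c_α > 0` and `log₂` is monotone on the naturals (`log₂ 0 = 0`).
-/

open Real

/-- The constant `c_α = (α+1)/((α+1)·log₂(α+1) − α·log₂ α)`. -/
noncomputable def cA (α : ℝ) : ℝ :=
  (α + 1) / ((α + 1) * logb 2 (α + 1) - α * logb 2 α)

/-- `k₀(α)` is the least `ℓ ∈ ℕ` such that `(α² − α − 1)/(α − 1) ≥ α^(−ℓ)`. -/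
noncomputable def k0 (α : ℝ) : ℕ :=
  sInf {ℓ : ℕ | (α ^ 2 - α - 1) / (α - 1) ≥ α ^ (-(ℓ : ℝ))}

/-- The constant `d_α = 2^(k₀(α)+1)·max{k₀(α)+1, 3}·(2α − 1)/(α − 1) + 1`. -/
noncomputable def dA (α : ℝ) : ℝ :=
  2 ^ (k0 α + 1) * max ((k0 α : ℝ) + 1) 3 * (2 * α - 1) / (α - 1) + 1

/-- `G_α(n, m) = n·(d_α − 1 + c_α·log₂ m)`. -/
noncomputable def G (α : ℝ) (n m : ℕ) : ℝ := (n : ℝ) * (dA α - 1 + cA α * logb 2 m)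

/-- `H_α(n, m) = n·(d_α + c_α·log₂ m)`. -/
noncomputable def H (α : ℝ) (n m : ℕ) : ℝ := (n : ℝ) * (dA α + cA α * logb 2 m)

theorem Real.logb_natCast_mono {b : ℝ} (hb : 1 < b) : Monotone fun n : ℕ ↦ logb b n := by
  intro m n hmn
  rcases m.eq_zero_or_pos with rfl | hm
  · simp only [Nat.cast_zero, logb_zero]
    exact div_nonneg (log_natCast_nonneg n) (log_nonneg hb.le)
  · exact logb_le_logb_of_le hb (by positivity) (by exact_mod_cast hmn)

theorem cA_pos {α : ℝ} (hα : 0 < α) : 0 < cA α := by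
  have hlog_lt : logb 2 α < logb 2 (α + 1) := logb_lt_logb one_lt_two hα (by linarith)
  have hlog_pos : 0 < logb 2 (α + 1) := logb_pos one_lt_two (by linarith)
  have hden : 0 < (α + 1) * logb 2 (α + 1) - α * logb 2 α := by nlinarith
  exact div_pos (by linarith) hden

theorem six_mul_div_add_one_le_dA {α : ℝ} (hα : 1 < α) :
    6 * ((2 * α - 1) / (α - 1)) + 1 ≤ dA α := by
  have hpow : (2 : ℝ) ≤ 2 ^ (k0 α + 1) := le_self_pow₀ one_le_two (by omega)
  have hmax : (3 : ℝ) ≤ max ((k0 α : ℝ) + 1) 3 := le_max_right _ _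
  have hq : 0 ≤ (2 * α - 1) / (α - 1) := div_nonneg (by linarith) (by linarith)
  rw [dA, mul_div_assoc]
  gcongr
  nlinarith

theorem two_mul_add_le_mul_dA {α x y : ℝ} (hα : 1 < α) (hy : 0 ≤ y)
    (h : x ≤ α / (α - 1) * y) : 2 * (x + y) ≤ y * dA α := by
  have hq : 0 ≤ (2 * α - 1) / (α - 1) := div_nonneg (by linarith) (by linarith)
  have hdA := six_mul_div_add_one_le_dA hα
  have hα₁ : α - 1 ≠ 0 := by linarith
  calc 2 * (x + y) ≤ 2 * (α / (α - 1) * y + y) := by gcongr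
    _ = y * (2 * ((2 * α - 1) / (α - 1))) := by field_simp; ring
    _ ≤ y * dA α := by gcongr; linarith

theorem GHalpha_bound_b_general (α : ℝ) (hφ : (1 + Real.sqrt 5) / 2 < α)
    (n₁ n₂ m₁ m₂ : ℕ) (h : (n₁ : ℝ) ≤ α / (α - 1) * n₂) :
    H α n₁ m₁ + n₁ + n₂ ≤ G α (n₁ + n₂) (m₁ + m₂) := by
  have hα : 1 < α := by
    have : 1 ≤ √5 := one_le_sqrt.mpr (by norm_num)
    linarith
  have hd := two_mul_add_le_mul_dA hα (Nat.cast_nonneg n₂) h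
  have hmono := logb_natCast_mono one_lt_two
  have hlog : (n₁ : ℝ) * logb 2 m₁ ≤ (n₁ + n₂ : ℕ) * logb 2 (m₁ + m₂ : ℕ) :=
    calc (n₁ : ℝ) * logb 2 m₁ ≤ n₁ * logb 2 (m₁ + m₂ : ℕ) :=
          mul_le_mul_of_nonneg_left (hmono (Nat.le_add_right m₁ m₂)) n₁.cast_nonneg
      _ ≤ (n₁ + n₂ : ℕ) * logb 2 (m₁ + m₂ : ℕ) :=
          mul_le_mul_of_nonneg_right (by gcongr; omega)
            (by simpa using hmono (Nat.zero_le (m₁ + m₂)))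
  have hc := mul_le_mul_of_nonneg_left hlog (cA_pos (α := α) (by linarith)).le
  unfold G H
  push_cast at hc ⊢
  linear_combination hd + hc

/-- Lemma 17(b): for `φ < α < 2`, if `n₁ ≤ (α/(α−1))·n₂` then
`H_α(n₁,m₁) + n₁ + n₂ ≤ G_α(n₁+n₂, m₁+m₂)`. -/
theorem GHalpha_bound_b (α : ℝ) (hφ : (1 + Real.sqrt 5) / 2 < α) (hα2 : α < 2)
    (n₁ n₂ m₁ m₂ : ℕ) (hn₁ : 0 < n₁) (hn₂ : 0 < n₂) (hm₁ : 0 < m₁) (hm₂ : 0 < m₂)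
    (h : (n₁ : ℝ) ≤ α / (α - 1) * n₂) :
    H α n₁ m₁ + n₁ + n₂ ≤ G α (n₁ + n₂) (m₁ + m₂) :=
  GHalpha_bound_b_general α hφ n₁ n₂ m₁ m₂ h
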